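/- arXiv:2411.00271 — 6 statements merged into one kernel-verified Lean document; each statement's English description precedes it below -/
import Mathlib

section
/- Let G be an abelian torsion group with |G| ≠ 2, and let g ∈ G be an element of order 2. Then there exists h ∈ G with h ≠ g such that either h has order 2, or h has order 2k for some integer k ≥ 2 and k·h = g. -/
theorem torsion_group_order_two {G : Type*} [AddCommGroup G]
    (htor : ∀ x : G, ∃ n : ℕ, 0 < n ∧ n • x = 0)
    (hcard : Nat.card G ≠ 2) (g : G) (hg : addOrderOf g = 2) :
    ∃ h : G, h ≠ g ∧ (addOrderOf h = 2 ∨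
      ∃ k : ℕ, 2 ≤ k ∧ addOrderOf h = 2 * k ∧ k • h = g) := by
  have hg0 : g ≠ 0 := by
    intro h0; rw [h0, addOrderOf_zero] at hg; omega
  -- find x ∉ {0, g}
  have hx : ∃ x : G, x ≠ 0 ∧ x ≠ g := by
    by_contra hc
    push_neg at hc
    apply hcard
    rw [Nat.card_eq_two_iff]
    refine ⟨0, g, Ne.symm hg0, ?_⟩
    ext y
    simp only [Set.mem_insert_iff, Set.mem_singleton_iff, Set.mem_univ, iff_true]
    by_cases hy : y = 0
    · exact Or.inl hy
    · exact Or.inr (hc y hy)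
  obtain ⟨x, hx0, hxg⟩ := hx
  have hfin : ∀ y : G, IsOfFinAddOrder y := by
    intro y
    obtain ⟨n, hn, hny⟩ := htor y
    exact isOfFinAddOrder_iff_nsmul_eq_zero.2 ⟨n, hn, hny⟩
  set n := addOrderOf x with hn
  have hnpos : 0 < n := (hfin x).addOrderOf_pos
  have hn1 : n ≠ 1 := by
    intro h1
    exact hx0 (AddMonoid.addOrderOf_eq_one_iff.1 h1)
  rcases Nat.even_or_odd n with he | ho
  · -- n even
    obtain ⟨m, hm⟩ := he
    have hm' : n = 2 * m := by omega
    have hmpos : 0 < m := by omega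
    have hordmx : addOrderOf (m • x) = 2 := by
      rw [(hfin x).addOrderOf_nsmul, ← hn, hm']
      rw [Nat.gcd_comm]
      have hgcd : Nat.gcd m (2 * m) = m := Nat.gcd_eq_left ⟨2, by ring⟩
      rw [hgcd, Nat.mul_div_cancel _ hmpos]
    by_cases hmx : m • x = g
    · -- h = x, k = m
      have hm2 : 2 ≤ m := by
        rcases Nat.lt_or_ge m 2 with h | h
        · interval_cases m
          rw [one_smul] at hmx; exact absurd hmx hxg
        · exact h
      exact ⟨x, hxg, Or.inr ⟨m, hm2, hm'.symm ▸ rfl, hmx⟩⟩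
    · exact ⟨m • x, hmx, Or.inl hordmx⟩
  · -- n odd : h = x + g
    have hco : (addOrderOf x).Coprime (addOrderOf g) := by
      rw [hg, ← hn]
      exact Nat.coprime_two_right.2 ho
    have hord : addOrderOf (x + g) = n * 2 := by
      rw [(AddCommute.all x g).addOrderOf_add_eq_mul_addOrderOf_of_coprime hco, hg, hn]
    have hn3 : 3 ≤ n := by
      rcases ho with ⟨t, ht⟩; omega
    refine ⟨x + g, ?_, Or.inr ⟨n, by omega, by rw [hord, Nat.mul_comm], ?_⟩⟩
    · intro h
      apply hx0
      have : x + g = 0 + g := by rw [h, zero_add]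
      exact add_right_cancel this
    · rw [smul_add]
      have h1 : n • x = 0 := addOrderOf_nsmul_eq_zero x
      have h2 : n • g = g := by
        rcases ho with ⟨t, ht⟩
        rw [ht, add_smul, mul_comm, mul_smul, two_smul, ← two_smul ℕ g]
        have : (2 : ℕ) • g = 0 := hg ▸ addOrderOf_nsmul_eq_zero g
        rw [this, smul_zero, zero_add, one_smul]
      rw [h1, h2, zero_add]
end

section
/- Let F be a factorial monoid generated by its units together with s ≥ 2 pairwise non-associated prime elements p₁,…,p_s, and let H ⊆ F be finitely primary of rank s and exponent α, i.e., H∖H^× ⊆ p₁⋯p_s F and (p₁⋯p_s)^α F ⊆ H. Then for every i ∈ [1,s], the set of values v_{p_i}(u) as u ranges over the atoms of H is infinite. -/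
open scoped nonZeroDivisors

section MonoidDefs
variable {H B : Type*} [CommMonoid H] [CommMonoid B]

/-- The set of lengths of `a`: `{0}` for units, otherwise the set of `k` such that
`a` is a product of `k` atoms (irreducible elements). -/
def lengthsSet (a : H) : Set ℕ :=
  {k | (IsUnit a ∧ k = 0) ∨
    (¬ IsUnit a ∧ ∃ l : Multiset H, Multiset.card l = k ∧ (∀ x ∈ l, Irreducible x) ∧ l.prod = a)}

/-- A transfer homomorphism: (T1) `B = θ(H)·B^×` and `θ⁻¹(B^×) = H^×`;
(T2) factorizations of `θ u` lift to factorizations of `u` up to associates. -/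
def IsTransferHom (θ : H →* B) : Prop :=
  (∀ b : B, ∃ u : H, ∃ ε : Bˣ, b = θ u * ε) ∧
  (∀ u : H, IsUnit (θ u) → IsUnit u) ∧
  (∀ u : H, ∀ b c : B, θ u = b * c →
    ∃ v w : H, u = v * w ∧ Associated (θ v) b ∧ Associated (θ w) c)

/-- A Krull monoid: a monoid admitting a divisor homomorphism into a
free abelian monoid. -/
def IsKrullMonoid (H : Type*) [CommMonoid H] : Prop :=
  ∃ (ι : Type) (d : H →* Multiplicative (ι →₀ ℕ)), ∀ a b : H, d a ∣ d b → a ∣ b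

/-- Half-factorial: all factorizations of an element into atoms have the same length. -/
def IsHalfFactorial (A : Type*) [CommMonoid A] : Prop :=
  ∀ (a : A) (l m : Multiset A), (∀ x ∈ l, Irreducible x) → (∀ x ∈ m, Irreducible x) →
    l.prod = a → m.prod = a → Multiset.card l = Multiset.card m

/-- An absolutely irreducible element: an atom all of whose powers factor uniquely
into atoms, up to associates. -/
def AbsolutelyIrreducible (a : H) : Prop :=
  Irreducible a ∧ ∀ n : ℕ, 0 < n → ∀ l m : Multiset H,
    (∀ x ∈ l, Irreducible x) → (∀ x ∈ m, Irreducible x) →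
    l.prod = a ^ n → m.prod = a ^ n → Multiset.Rel Associated l m

end MonoidDefs

/-- A prime element of a monoid. -/
def IsPrimeElem {F : Type*} [CommMonoid F] (q : F) : Prop :=
  ¬ IsUnit q ∧ ∀ a b : F, q ∣ a * b → q ∣ a ∨ q ∣ b

/-!
Every non-unit of `H` is divisible by `p₁⋯p_s`, so `v_{p_j} ≥ 1` on the non-units of `H`.
Fix `j ≠ i` and `x = (p₁⋯p_s)^α p_i^{αN} ∈ H`. A factorization of `x` into atoms has at most
`v_{p_j}(x) = α` factors, which share `v_{p_i}(x) = α(N + 1)`, so one of them has `v_{p_i} > N`.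
Factorizations are not needed: by the mediant inequality, splitting a non-atom into two
non-units never lowers the largest ratio `v_{p_i} / v_{p_j}` of the pieces.
-/

theorem exists_irreducible_le_mul {M : Type*} [CommMonoid M] (f g : M → ℕ)
    (hf : ∀ x y, f (x * y) ≤ f x + f y) (hg : ∀ x y, g (x * y) = g x + g y)
    (hg_pos : ∀ x, ¬ IsUnit x → 0 < g x) (x : M) (hx : ¬ IsUnit x) :
    ∃ a, Irreducible a ∧ f x ≤ g x * f a := by
  induction hn : g x using Nat.strong_induction_on generalizing x with
  | _ n ih =>
  subst hn
  by_cases hirr : Irreducible x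
  · exact ⟨x, hirr, Nat.le_mul_of_pos_left _ (hg_pos x hx)⟩
  obtain ⟨b, c, rfl, hb, hc⟩ : ∃ b c, x = b * c ∧ ¬ IsUnit b ∧ ¬ IsUnit c := by
    simpa [irreducible_iff, hx] using hirr
  have hgbc := hg b c
  obtain ⟨a₁, ha₁, hb'⟩ := ih (g b) (by have := hg_pos c hc; omega) b hb rfl
  obtain ⟨a₂, ha₂, hc'⟩ := ih (g c) (by have := hg_pos b hb; omega) c hc rfl
  rcases le_total (f a₁) (f a₂) with h | h
  · refine ⟨a₂, ha₂, ?_⟩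
    calc f (b * c) ≤ f b + f c := hf b c
      _ ≤ g b * f a₂ + g c * f a₂ := by gcongr; exact hb'.trans (Nat.mul_le_mul_left _ h)
      _ = g (b * c) * f a₂ := by rw [hgbc, add_mul]
  · refine ⟨a₁, ha₁, ?_⟩
    calc f (b * c) ≤ f b + f c := hf b c
      _ ≤ g b * f a₁ + g c * f a₁ := by gcongr; exact hc'.trans (Nat.mul_le_mul_left _ h)
      _ = g (b * c) * f a₁ := by rw [hgbc, add_mul]

namespace IsPrimeElem

variable {F : Type*} [CancelCommMonoid F] {q r : F}

theorem not_dvd_of_isUnit (hq : IsPrimeElem q) (hr : IsUnit r) : ¬ q ∣ r :=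
  fun h => hq.1 (isUnit_of_dvd_unit h hr)

theorem dvd_of_dvd_pow (hq : IsPrimeElem q) {n : ℕ} (h : q ∣ r ^ n) : q ∣ r := by
  induction n with
  | zero => exact absurd (pow_zero r ▸ h) (hq.not_dvd_of_isUnit isUnit_one)
  | succ n ih => exact (hq.2 _ _ (pow_succ r n ▸ h)).elim ih id

theorem exists_mem_dvd_of_dvd_prod (hq : IsPrimeElem q) {ι : Type*} {t : Finset ι}
    {f : ι → F} (h : q ∣ ∏ j ∈ t, f j) : ∃ j ∈ t, q ∣ f j := by
  classical
  induction t using Finset.induction with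
  | empty => exact absurd h (hq.not_dvd_of_isUnit isUnit_one)
  | insert a t ha ih =>
    rw [Finset.prod_insert ha] at h
    rcases hq.2 _ _ h with h | h
    · exact ⟨a, Finset.mem_insert_self a t, h⟩
    · obtain ⟨j, hj, hdvd⟩ := ih h
      exact ⟨j, Finset.mem_insert_of_mem hj, hdvd⟩

theorem associated_of_dvd (hq : IsPrimeElem q) (hr : IsPrimeElem r) (h : q ∣ r) :
    Associated q r := by
  obtain ⟨c, rfl⟩ := h
  rcases hr.2 q c dvd_rfl with ⟨d, hd⟩ | ⟨d, hd⟩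
  · have hcd : c * d = 1 := mul_eq_left.mp (by rw [← mul_assoc, ← hd])
    exact associated_mul_unit_right q c (IsUnit.of_mul_eq_one d hcd)
  · have hqd : q * d = 1 := mul_eq_left.mp (by rw [mul_left_comm, ← hd])
    exact absurd (IsUnit.of_mul_eq_one d hqd) hq.1

end IsPrimeElem

section Valuation

variable {F : Type*} [CancelCommMonoid F] {s : ℕ} {p : Fin s → F}
  (hprime : ∀ i, IsPrimeElem (p i)) (hnonassoc : ∀ i j, i ≠ j → ¬ Associated (p i) (p j))
include hprime hnonassoc

theorem not_dvd_unit_mul_prod_erase (ε : Fˣ) (a : Fin s → ℕ) (i : Fin s) :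
    ¬ p i ∣ ε * ∏ j ∈ Finset.univ.erase i, p j ^ a j := by
  intro h
  rcases (hprime i).2 _ _ h with h | h
  · exact (hprime i).not_dvd_of_isUnit ε.isUnit h
  obtain ⟨j, hj, hdvd⟩ := (hprime i).exists_mem_dvd_of_dvd_prod h
  exact hnonassoc i j (Finset.ne_of_mem_erase hj).symm
    ((hprime i).associated_of_dvd (hprime j) ((hprime i).dvd_of_dvd_pow hdvd))

theorem pow_dvd_unit_mul_prod_iff (ε : Fˣ) (a : Fin s → ℕ) (i : Fin s) (k : ℕ) :
    p i ^ k ∣ ε * ∏ j, p j ^ a j ↔ k ≤ a i := by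
  rw [← Finset.mul_prod_erase _ _ (Finset.mem_univ i), mul_left_comm]
  refine ⟨fun h => ?_, fun h => (pow_dvd_pow _ h).trans (dvd_mul_right _ _)⟩
  by_contra! hk
  obtain ⟨c, hc⟩ := (pow_dvd_pow (p i) hk).trans h
  exact not_dvd_unit_mul_prod_erase hprime hnonassoc ε a i
    ⟨c, mul_left_cancel (by rw [hc, pow_succ, mul_assoc])⟩

variable {v : F → Fin s → ℕ} (hrep : ∀ x : F, ∃ ε : Fˣ, x = (ε : F) * ∏ i, p i ^ v x i)
include hrep

theorem pow_dvd_iff_le_valuation (x : F) (i : Fin s) (k : ℕ) : p i ^ k ∣ x ↔ k ≤ v x i := by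
  obtain ⟨ε, hε⟩ := hrep x
  rw [← pow_dvd_unit_mul_prod_iff hprime hnonassoc ε (v x) i k, ← hε]

theorem dvd_iff_pos_valuation (x : F) (i : Fin s) : p i ∣ x ↔ 0 < v x i := by
  rw [← pow_one (p i)]
  exact pow_dvd_iff_le_valuation hprime hnonassoc hrep x i 1

theorem valuation_unit_mul_prod (ε : Fˣ) (a : Fin s → ℕ) : v (ε * ∏ j, p j ^ a j) = a :=
  funext fun i => eq_of_forall_le_iff fun k => by
    rw [← pow_dvd_iff_le_valuation hprime hnonassoc hrep,
      pow_dvd_unit_mul_prod_iff hprime hnonassoc]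

theorem valuation_mul (x y : F) : v (x * y) = v x + v y := by
  obtain ⟨ε, hε⟩ := hrep x
  obtain ⟨δ, hδ⟩ := hrep y
  have hxy : x * y = ((ε * δ : Fˣ) : F) * ∏ j, p j ^ (v x + v y) j := by
    simp only [Pi.add_apply, pow_add, Finset.prod_mul_distrib, Units.val_mul]
    rw [mul_mul_mul_comm, ← hε, ← hδ]
  rw [hxy, valuation_unit_mul_prod hprime hnonassoc hrep]

end Valuation

theorem finitely_primary_atoms_infinite_valuation {F : Type*} [CancelCommMonoid F]
    {s : ℕ} (hs : 2 ≤ s)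
    (p : Fin s → F) (hprime : ∀ i, IsPrimeElem (p i))
    (hnonassoc : ∀ i j, i ≠ j → ¬ Associated (p i) (p j))
    (v : F → Fin s → ℕ)
    (hrep : ∀ x : F, ∃ ε : Fˣ, x = (ε : F) * ∏ i, p i ^ v x i)
    (H : Submonoid F) {α : ℕ} (hα : 0 < α)
    (hH1 : ∀ x : ↥H, ¬ IsUnit x → (∏ i, p i) ∣ (x : F))
    (hH2 : ∀ y : F, (∏ i, p i) ^ α * y ∈ H)
    (i : Fin s) :
    {n : ℕ | ∃ u : ↥H, Irreducible u ∧ v (u : F) i = n}.Infinite := by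
  have : Nontrivial (Fin s) := Fin.nontrivial_iff_two_le.mpr hs
  obtain ⟨j, hji⟩ := exists_ne i
  have hmul (k : Fin s) (x y : H) : v (x * y : F) k = v x k + v y k :=
    congrFun (valuation_mul hprime hnonassoc hrep x y) k
  have hpos (x : H) (hx : ¬ IsUnit x) : 0 < v x j :=
    (dvd_iff_pos_valuation hprime hnonassoc hrep _ j).mp
      ((Finset.dvd_prod_of_mem p (Finset.mem_univ j)).trans (hH1 x hx))
  refine Set.infinite_of_not_bddAbove fun ⟨N, hN⟩ => ?_
  let x : H := ⟨(∏ k, p k) ^ α * p i ^ (α * N), hH2 _⟩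
  have hx : v x = fun k => α + if k = i then α * N else 0 := by
    convert valuation_unit_mul_prod hprime hnonassoc hrep 1 _ using 2
    simp only [x, Units.val_one, one_mul, pow_add, pow_ite, pow_zero, Finset.prod_mul_distrib,
      Finset.prod_pow, Finset.prod_ite_eq', Finset.mem_univ, if_true]
  have hx_unit : ¬ IsUnit x := fun hu =>
    (hprime j).not_dvd_of_isUnit (hu.map H.subtype)
      ((dvd_iff_pos_valuation hprime hnonassoc hrep x j).mpr (by simpa [hx, hji]))
  obtain ⟨a, ha, hle⟩ := exists_irreducible_le_mul (fun y : H => v y i) (fun y : H => v y j)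
    (fun y z => (hmul i y z).le) (hmul j) hpos x hx_unit
  have haN : v a i ≤ N := hN ⟨a, ha, rfl⟩
  simp only [hx, hji, if_true, if_false] at hle
  nlinarith
end

section
/- Let S be a monoid that is transfer Krull via the inclusion S ↪ H into a Krull monoid H with S ⊆ H ⊆ q(S) being a transfer homomorphism. Then H = S·H^×, H^× ∩ S = S^×, and the atoms of H are exactly the elements uε with u an atom of S and ε ∈ H^×. -/
open scoped nonZeroDivisors

theorem transfer_krull_via_inclusion {G : Type*} [CommGroup G]
    (S H : Submonoid G) (hSH : S ≤ H)
    (hq : ∀ g : G, ∃ a ∈ S, ∃ b ∈ S, g = a * b⁻¹)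
    (hKrull : IsKrullMonoid ↥H)
    (hTrans : IsTransferHom (Submonoid.inclusion hSH)) :
    (∀ h : ↥H, ∃ s : ↥S, ∃ ε : (↥H)ˣ, h = Submonoid.inclusion hSH s * ε) ∧
    (∀ s : ↥S, IsUnit (Submonoid.inclusion hSH s) ↔ IsUnit s) ∧
    (∀ h : ↥H, Irreducible h ↔
      ∃ u : ↥S, Irreducible u ∧ ∃ ε : (↥H)ˣ, h = Submonoid.inclusion hSH u * ε) := by
  obtain ⟨T1a, T1b, T2⟩ := hTrans
  set θ := Submonoid.inclusion hSH with hθ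
  refine ⟨T1a, fun s => ⟨T1b s, fun hs => hs.map θ⟩, fun h => ?_⟩
  constructor
  · intro hirr
    obtain ⟨u, ε, hu⟩ := T1a h
    refine ⟨u, ⟨fun huu => hirr.not_isUnit ?_, fun v w hvw => ?_⟩, ε, hu⟩
    · rw [hu]; exact (huu.map θ).mul ε.isUnit
    · have : h = θ v * (θ w * ε) := by
        rw [hu, hvw, map_mul, mul_assoc]
      rcases hirr.isUnit_or_isUnit this with hv | hw
      · exact Or.inl (T1b v hv)
      · exact Or.inr (T1b w ((Units.isUnit_mul_units _ ε).mp hw))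
  · rintro ⟨u, hu, ε, rfl⟩
    refine ⟨fun huu => hu.not_isUnit (T1b u ?_), fun b c hbc => ?_⟩
    · exact (Units.isUnit_mul_units _ ε).mp huu
    · have : θ u = b * (c * ↑ε⁻¹) := by
        have := congrArg (· * (↑ε⁻¹ : ↥H)) hbc
        simpa [mul_assoc] using this
      obtain ⟨v, w, hvw, hvb, hwc⟩ := T2 u b (c * ↑ε⁻¹) this
      rcases hu.isUnit_or_isUnit hvw with hv | hw
      · exact Or.inl (hvb.isUnit (hv.map θ))
      · right
        have : IsUnit (c * ↑ε⁻¹) := hwc.isUnit (hw.map θ)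
        exact (Units.isUnit_mul_units _ ε⁻¹).mp this
end

section
/- Let O ⊆ R be an order in a Dedekind domain such that the extension O ⊆ R of monoids of nonzero elements is a root extension (for every a ∈ R there is n ∈ ℕ with a^n ∈ O), and suppose O is transfer Krull via an overmonoid H with O^• ⊆ H ⊆ q(O^•) such that the inclusion O^• ↪ H is a transfer homomorphism and H is Krull. Then R^• ⊆ H and every atom of O^• is an atom of R^•. -/
open scoped nonZeroDivisors

section RingDefs
variable {R : Type*} [CommRing R]

/-- The conductor of a subring `O ⊆ R`: the largest ideal of `R` contained in `O`. -/
def Subring.conductor (O : Subring R) : Ideal R where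
  carrier := {x | ∀ r : R, x * r ∈ O}
  add_mem' := by
    intro a b ha hb r
    have h : (a + b) * r = a * r + b * r := by ring
    rw [h]; exact O.add_mem (ha r) (hb r)
  zero_mem' := by intro r; simpa using O.zero_mem
  smul_mem' := by
    intro c x hx r
    have h : c • x * r = x * (c * r) := by simp [smul_eq_mul]; ring
    rw [h]; exact hx (c * r)

/-- `a` is a regular element modulo the ideal `f`. -/
def RegF (f : Ideal R) (a : R) : Prop := IsUnit (Ideal.Quotient.mk f a)

end RingDefs

section TK
variable {K : Type*} [CommRing K]

/-- `x` and `y` are associated within the submonoid `H` of `K`. -/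
def AssocIn (H : Submonoid K) (x y : K) : Prop :=
  ∃ ε ∈ H, (∃ ε' ∈ H, ε * ε' = 1) ∧ x = y * ε

end TK

variable {R₀ : Type*}

/-- `H` is a Krull overmonoid of `O^∙` inside the quotient field of `O` (which is the
quotient field of `R`), with `O^∙ ⊆ H ⊆ q(O^∙)`, such that the inclusion `O^∙ ↪ H`
is a transfer homomorphism; this witnesses that `O` is transfer Krull. -/
structure IsTKOvermonoid {R : Type*} [CommRing R] [IsDomain R] [IsDedekindDomain R]
    (O : Subring R) (H : Submonoid (FractionRing R)) : Prop where
  nonzero : ∀ x ∈ H, x ≠ 0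
  incl : ∀ a : R, a ∈ O → a ≠ 0 → algebraMap R (FractionRing R) a ∈ H
  inQuot : ∀ x ∈ H, ∃ a b : R, a ∈ O ∧ b ∈ O ∧ a ≠ 0 ∧ b ≠ 0 ∧
    x * algebraMap R (FractionRing R) b = algebraMap R (FractionRing R) a
  krull : IsKrullMonoid ↥H
  t1 : ∀ x ∈ H, ∃ a : R, a ∈ O ∧ a ≠ 0 ∧ ∃ ε ∈ H, (∃ ε' ∈ H, ε * ε' = 1) ∧
    x = algebraMap R (FractionRing R) a * ε
  t1' : ∀ a : R, a ∈ O → a ≠ 0 →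
    (∃ y ∈ H, algebraMap R (FractionRing R) a * y = 1) → ∃ b ∈ O, a * b = 1
  t2 : ∀ a : R, a ∈ O → a ≠ 0 → ∀ x ∈ H, ∀ y ∈ H,
    algebraMap R (FractionRing R) a = x * y →
    ∃ v w : R, v ∈ O ∧ w ∈ O ∧ a = v * w ∧
      AssocIn H (algebraMap R (FractionRing R) v) x ∧
      AssocIn H (algebraMap R (FractionRing R) w) y

/-! Divisibility in a free abelian monoid is coordinatewise, so Krull monoids are root closed;
hence `r = a / b ∈ R^•` with `a, b ∈ O^•` and `r ^ n ∈ O^•` lies in `H`. For an atom `a` of `O^•`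
and a factorization `a = x * y` in `R`, the transfer property pulls `x * y` back to a
factorization `a = v * w` in `O` up to units of `H`. One of `v, w` is a unit of `O`, so `x` or
`y` becomes invertible in `H`; a power of it lies in `O^•`, whose units are `H^× ∩ O^•`, so it
is a unit of `R`. -/

theorem Multiplicative.finsupp_dvd_of_pow_dvd_pow {ι : Type*} {u v : Multiplicative (ι →₀ ℕ)}
    {n : ℕ} (hn : n ≠ 0) (h : u ^ n ∣ v ^ n) : u ∣ v := by
  rw [dvd_iff_exists_eq_mul_right, ← le_iff_exists_mul] at h ⊢
  rw [← Multiplicative.toAdd_le, Finsupp.le_def] at h ⊢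
  exact fun i ↦ le_of_nsmul_le_nsmul_right hn (h i)

theorem IsKrullMonoid.dvd_of_pow_dvd_pow {M : Type*} [CommMonoid M] (hM : IsKrullMonoid M)
    {a b : M} {n : ℕ} (hn : n ≠ 0) (h : a ^ n ∣ b ^ n) : a ∣ b := by
  obtain ⟨ι, d, hd⟩ := hM
  refine hd a b (Multiplicative.finsupp_dvd_of_pow_dvd_pow hn ?_)
  simpa only [map_pow] using map_dvd d h

theorem IsKrullMonoid.mem_of_pow_mem {K : Type*} [CommGroupWithZero K] {H : Submonoid K}
    (hH : IsKrullMonoid H) {b x : K} (hb : b ∈ H) (hb0 : b ≠ 0) (hbx : b * x ∈ H) {n : ℕ}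
    (hn : n ≠ 0) (hxn : x ^ n ∈ H) : x ∈ H := by
  have hpow : (⟨b, hb⟩ : H) ^ n ∣ ⟨b * x, hbx⟩ ^ n :=
    ⟨⟨x ^ n, hxn⟩, Subtype.ext (mul_pow b x n)⟩
  obtain ⟨⟨k, hk⟩, hbk⟩ := hH.dvd_of_pow_dvd_pow hn hpow
  have hxk : b * x = b * k := congrArg Subtype.val hbk
  rwa [mul_left_cancel₀ hb0 hxk]

theorem Submonoid.isUnit_of_isUnit_coe {M : Type*} [CommMonoid M] {S : Submonoid M}
    (hroot : ∀ m : M, ∃ n : ℕ, 0 < n ∧ m ^ n ∈ S) {a : S} (ha : IsUnit (a : M)) : IsUnit a := by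
  obtain ⟨s, has⟩ := ha.exists_right_inv
  obtain ⟨n, hn, hsn⟩ := hroot s
  refine (isUnit_pow_iff hn.ne').1 (IsUnit.of_mul_eq_one ⟨s ^ n, hsn⟩ (Subtype.ext ?_))
  simp only [Submonoid.coe_mul, SubmonoidClass.coe_pow, ← mul_pow, has, one_pow,
    Submonoid.coe_one]

namespace IsTKOvermonoid

variable {R : Type*} [CommRing R] [IsDomain R] [IsDedekindDomain R] {O : Subring R}
  {H : Submonoid (FractionRing R)}

theorem algebraMap_mem (hH : IsTKOvermonoid O H)
    (hfrac : ∀ r : R, ∃ a b : O, (b : R) ≠ 0 ∧ (b : R) * r = a)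
    (hroot : ∀ a : R, ∃ n : ℕ, 0 < n ∧ a ^ n ∈ O) {r : R} (hr : r ≠ 0) :
    algebraMap R (FractionRing R) r ∈ H := by
  obtain ⟨n, hn, hrn⟩ := hroot r
  obtain ⟨a, b, hb, hba⟩ := hfrac r
  have ha : (a : R) ≠ 0 := hba ▸ mul_ne_zero hb hr
  refine hH.krull.mem_of_pow_mem (hH.incl b b.2 hb)
    ((map_ne_zero_iff _ (IsFractionRing.injective R _)).2 hb) ?_ hn.ne' ?_
  · rw [← map_mul, hba]
    exact hH.incl a a.2 ha
  · rw [← map_pow]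
    exact hH.incl _ hrn (pow_ne_zero n hr)

theorem isUnit_of_inv_mem (hH : IsTKOvermonoid O H)
    (hroot : ∀ a : R, ∃ n : ℕ, 0 < n ∧ a ^ n ∈ O) {x : R} {z : FractionRing R} (hz : z ∈ H)
    (hxz : algebraMap R (FractionRing R) x * z = 1) : IsUnit x := by
  have hx : x ≠ 0 := by
    rintro rfl
    simp at hxz
  obtain ⟨n, hn, hxn⟩ := hroot x
  obtain ⟨b, -, hb⟩ := hH.t1' (x ^ n) hxn (pow_ne_zero n hx)
    ⟨z ^ n, pow_mem hz n, by rw [map_pow, ← mul_pow, hxz, one_pow]⟩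
  exact (isUnit_pow_iff hn.ne').1 (IsUnit.of_mul_eq_one b hb)

theorem isUnit_of_assocIn (hH : IsTKOvermonoid O H)
    (hroot : ∀ a : R, ∃ n : ℕ, 0 < n ∧ a ^ n ∈ O) {v : O} (hv : IsUnit v) {x : R}
    (hvx : AssocIn H (algebraMap R (FractionRing R) v) (algebraMap R (FractionRing R) x)) :
    IsUnit x := by
  obtain ⟨c, hvc⟩ := hv.exists_right_inv
  obtain ⟨ε, hε, -, hvx⟩ := hvx
  have hc : (c : R) ≠ 0 := by exact_mod_cast right_ne_zero_of_mul_eq_one hvc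
  refine hH.isUnit_of_inv_mem hroot (H.mul_mem hε (hH.incl c c.2 hc)) ?_
  rw [← mul_assoc, ← hvx, ← map_mul, ← Subring.coe_mul, hvc, Subring.coe_one, map_one]

theorem irreducible_coe (hH : IsTKOvermonoid O H)
    (hfrac : ∀ r : R, ∃ a b : O, (b : R) ≠ 0 ∧ (b : R) * r = a)
    (hroot : ∀ a : R, ∃ n : ℕ, 0 < n ∧ a ^ n ∈ O) {a : O} (ha : Irreducible a) :
    Irreducible (a : R) := by
  have ha0 : (a : R) ≠ 0 := by exact_mod_cast ha.ne_zero
  refine ⟨fun hu ↦ ha.not_isUnit (Submonoid.isUnit_of_isUnit_coe (S := O.toSubmonoid) hroot hu),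
    fun {x y} hxy ↦ ?_⟩
  have hx : algebraMap R (FractionRing R) x ∈ H :=
    hH.algebraMap_mem hfrac hroot (left_ne_zero_of_mul (hxy ▸ ha0))
  have hy : algebraMap R (FractionRing R) y ∈ H :=
    hH.algebraMap_mem hfrac hroot (right_ne_zero_of_mul (hxy ▸ ha0))
  obtain ⟨v, w, hv, hw, hvw, hvx, hwy⟩ := hH.t2 a a.2 ha0 _ hx _ hy (by rw [hxy, map_mul])
  have hsplit : a = ⟨v, hv⟩ * ⟨w, hw⟩ := Subtype.ext hvw
  exact (ha.isUnit_or_isUnit hsplit).imp (hH.isUnit_of_assocIn hroot · hvx)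
    (hH.isUnit_of_assocIn hroot · hwy)

end IsTKOvermonoid

theorem root_extension_atoms_general {R : Type*} [CommRing R] [IsDomain R] [IsDedekindDomain R]
    (O : Subring R)
    (hfrac : ∀ r : R, ∃ a b : ↥O, (b : R) ≠ 0 ∧ (b : R) * r = (a : R))
    (hroot : ∀ a : R, ∃ n : ℕ, 0 < n ∧ a ^ n ∈ O)
    (H : Submonoid (FractionRing R)) (hH : IsTKOvermonoid O H) :
    (∀ r : R, r ≠ 0 → algebraMap R (FractionRing R) r ∈ H) ∧
    (∀ a : ↥O, Irreducible a → Irreducible ((a : R))) :=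
  ⟨fun _ hr ↦ hH.algebraMap_mem hfrac hroot hr, fun _ ha ↦ hH.irreducible_coe hfrac hroot ha⟩

theorem root_extension_atoms {R : Type*} [CommRing R] [IsDomain R] [IsDedekindDomain R]
    (O : Subring R) (hne : O ≠ ⊤) (hfg : Module.Finite ↥O R)
    (hfrac : ∀ r : R, ∃ a b : ↥O, (b : R) ≠ 0 ∧ (b : R) * r = (a : R))
    (hroot : ∀ a : R, ∃ n : ℕ, 0 < n ∧ a ^ n ∈ O)
    (H : Submonoid (FractionRing R)) (hH : IsTKOvermonoid O H) :
    (∀ r : R, r ≠ 0 → algebraMap R (FractionRing R) r ∈ H) ∧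
    (∀ a : ↥O, Irreducible a → Irreducible ((a : R))) :=
  root_extension_atoms_general O hfrac hroot H hH
end

section
/- Let R be a Dedekind domain with torsion class group, O ⊆ R an order with conductor f such that R/f is finite, every class of Cl(R) contains a prime ideal coprime to f, and suppose O is transfer Krull via an overmonoid H as in Proposition 2.2. Then every absolutely irreducible element a ∈ Reg_f(R) is R-associated to an element of O. -/
open scoped nonZeroDivisors

variable {R₀ : Type*}

/-! Since `R ⧸ f` is finite and `a` is a unit modulo `f`, some power `a ^ n` lies in
`1 + f ⊆ O`. The conductor is nonzero and a Krull monoid is completely integrally closed, so `H`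
contains every nonzero element of `R`. Splitting `a ^ n = a * a ^ (n - 1)` in `H` and lifting
along the transfer homomorphism gives `a ^ n = v * w` in `O` with `v` associated to `a` in `H`.
Absolute irreducibility makes `v` associated to some `a ^ k` in `R`, hence `a` to `a ^ k` in `H`;
in a Krull monoid this forces `k = 1` unless `a` is a unit of `H`, which the transfer property
excludes. So `a` is associated to `v ∈ O`. -/

theorem Nat.le_of_forall_mul_le_succ_mul {A B : ℕ} (h : ∀ j : ℕ, j * A ≤ (j + 1) * B) :
    A ≤ B := by
  by_contra! hlt
  nlinarith [h (B + 1)]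

theorem Multiplicative.finsupp_dvd_iff_forall_le {ι : Type*} {x y : Multiplicative (ι →₀ ℕ)} :
    x ∣ y ↔ ∀ i, x.toAdd i ≤ y.toAdd i :=
  (le_iff_exists_add (a := x.toAdd) (b := y.toAdd)).symm.trans Finsupp.le_def

namespace IsKrullMonoid

variable {M : Type*} [CommMonoid M]

theorem isUnit_of_associated_pow (hM : IsKrullMonoid M) {a : M} {k : ℕ} (hk : k ≠ 1)
    (h : Associated a (a ^ k)) : IsUnit a := by
  obtain ⟨ι, d, hd⟩ := hM
  have hda : d a = d a ^ k := by
    rw [← map_pow]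
    exact associated_iff_eq.1 (h.map d)
  have hda1 : d a = 1 := by
    refine Multiplicative.toAdd.injective (Finsupp.ext fun i => ?_)
    have hi := congrArg (fun x => x.toAdd i) hda
    simp only [toAdd_pow, Finsupp.smul_apply, smul_eq_mul] at hi
    exact eq_zero_of_mul_eq_self_left hk hi.symm
  exact isUnit_of_dvd_one (hd a 1 (by rw [hda1, map_one]))

theorem dvd_of_forall_pow_dvd_pow_succ (hM : IsKrullMonoid M) {c y : M}
    (h : ∀ j : ℕ, c ^ j ∣ y ^ (j + 1)) : c ∣ y := by
  obtain ⟨ι, d, hd⟩ := hM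
  refine hd c y (Multiplicative.finsupp_dvd_iff_forall_le.2 fun i => ?_)
  refine Nat.le_of_forall_mul_le_succ_mul fun j => ?_
  have hj := map_dvd d (h j)
  rw [map_pow, map_pow, Multiplicative.finsupp_dvd_iff_forall_le] at hj
  simpa only [toAdd_pow, Finsupp.smul_apply, smul_eq_mul] using hj i

theorem mem_of_forall_mul_pow_mem {K : Type*} [CommMonoidWithZero K]
    [IsLeftCancelMulZero K] {H : Submonoid K} (hH : IsKrullMonoid H) {c x : K} (hc : c ∈ H)
    (hc0 : c ≠ 0) (h : ∀ j : ℕ, c * x ^ j ∈ H) : x ∈ H := by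
  have hpow (j : ℕ) : (c * x) ^ (j + 1) = c ^ j * (c * x ^ (j + 1)) := by
    rw [mul_pow, pow_succ, mul_assoc]
  obtain ⟨⟨z, hz⟩, hcz⟩ := hH.dvd_of_forall_pow_dvd_pow_succ (c := ⟨c, hc⟩)
    (y := ⟨c * x, by simpa using h 1⟩) fun j => ⟨⟨_, h (j + 1)⟩, Subtype.ext (hpow j)⟩
  rwa [mul_left_cancel₀ hc0 (congrArg Subtype.val hcz : c * x = c * z)]

end IsKrullMonoid

namespace Subring

variable {R : Type*} [CommRing R]

theorem mem_of_mem_conductor {O : Subring R} {x : R} (hx : x ∈ O.conductor) : x ∈ O := by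
  simpa using hx 1

theorem conductor_ne_bot [IsDomain R] {O : Subring R} [Module.Finite O R]
    (hfrac : ∀ r : R, ∃ a b : O, (b : R) ≠ 0 ∧ (b : R) * r = a) : O.conductor ≠ ⊥ := by
  let p : Submodule O R := LinearMap.range (Algebra.linearMap O R)
  have htors : Module.IsTorsion O (R ⧸ p) := by
    rintro x
    induction x using Submodule.Quotient.induction_on with | _ r
    obtain ⟨a, b, hb, hbr⟩ := hfrac r
    refine ⟨⟨b, mem_nonZeroDivisors_of_ne_zero (by simpa using hb)⟩, ?_⟩
    rw [Submonoid.mk_smul, ← Submodule.Quotient.mk_smul, Submodule.Quotient.mk_eq_zero]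
    exact ⟨a, hbr.symm⟩
  obtain ⟨c, hc, hc0⟩ := Submodule.annihilator_top_inter_nonZeroDivisors htors
  refine (Submodule.ne_bot_iff _).2 ⟨c, fun r => ?_, by simpa using nonZeroDivisors.ne_zero hc0⟩
  have hcr := Submodule.mem_annihilator.1 hc (Submodule.Quotient.mk r) Submodule.mem_top
  rw [← Submodule.Quotient.mk_smul, Submodule.Quotient.mk_eq_zero] at hcr
  obtain ⟨o, ho⟩ := hcr
  rw [← smul_eq_mul, ← Subring.smul_def, ← ho]
  exact o.2

end Subring

theorem RegF.exists_pow_sub_one_mem {R : Type*} [CommRing R] {f : Ideal R} [Finite (R ⧸ f)]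
    {a : R} (h : RegF f a) : ∃ n, 0 < n ∧ a ^ n - 1 ∈ f := by
  obtain ⟨n, hn, hpow⟩ := isOfFinOrder_iff_pow_eq_one.1 (isOfFinOrder_of_finite h.unit)
  refine ⟨n, hn, Ideal.Quotient.eq.1 ?_⟩
  simpa [Units.val_pow_eq_pow_val, h.unit_spec] using congrArg Units.val hpow

namespace AbsolutelyIrreducible

variable {M : Type*} [CommMonoidWithZero M] [NoZeroDivisors M] [WfDvdMonoid M] {a : M}

theorem associated_of_irreducible_dvd_pow (ha : AbsolutelyIrreducible a) {n : ℕ} (hn : 0 < n)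
    {q : M} (hq : Irreducible q) (hdvd : q ∣ a ^ n) : Associated a q := by
  obtain ⟨w, hw⟩ := hdvd
  obtain ⟨l, hl, u, hu⟩ :=
    WfDvdMonoid.exists_factors w (right_ne_zero_of_mul (hw ▸ pow_ne_zero n ha.1.ne_zero))
  have hqu : Associated q (q * u) := associated_mul_unit_right q u u.isUnit
  -- the unit `u` is absorbed into `q`, so that `q * u ::ₘ l` multiplies to `a ^ n` exactly
  have hrel := ha.2 n hn (Multiset.replicate n a) ((q * u) ::ₘ l)
    (fun x hx => Multiset.eq_of_mem_replicate hx ▸ ha.1)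
    (Multiset.forall_mem_cons.2 ⟨hqu.irreducible hq, hl⟩) (Multiset.prod_replicate n a)
    (by rw [Multiset.prod_cons, hw, ← hu, mul_right_comm, mul_assoc])
  exact ((Multiset.rel_replicate_left.1 hrel).2 _ (Multiset.mem_cons_self _ _)).trans hqu.symm

theorem exists_associated_pow_of_dvd_pow (ha : AbsolutelyIrreducible a) {n : ℕ} (hn : 0 < n)
    {v : M} (hv0 : v ≠ 0) (hv : v ∣ a ^ n) : ∃ k, Associated (a ^ k) v := by
  induction v using WfDvdMonoid.induction_on_irreducible with
  | zero => exact absurd rfl hv0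
  | unit u hu => exact ⟨0, by simpa using (associated_one_iff_isUnit.2 hu).symm⟩
  | mul v q hv0' hq ih =>
    obtain ⟨k, hk⟩ := ih hv0' (dvd_of_mul_left_dvd hv)
    have hq := ha.associated_of_irreducible_dvd_pow hn hq (dvd_of_mul_right_dvd hv)
    exact ⟨k + 1, pow_succ' a k ▸ hq.mul_mul hk⟩

end AbsolutelyIrreducible

theorem AssocIn.associated {K : Type*} [CommRing K] {H : Submonoid K} {x y : K}
    (h : AssocIn H x y) (hx : x ∈ H) (hy : y ∈ H) : Associated (⟨y, hy⟩ : H) ⟨x, hx⟩ := by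
  obtain ⟨ε, hε, ⟨ε', hε', hεε'⟩, rfl⟩ := h
  exact ⟨Units.mkOfMulEqOne ⟨ε, hε⟩ ⟨ε', hε'⟩ (Subtype.ext hεε'), rfl⟩

theorem Associated.assocIn_map {R K : Type*} [CommRing R] [CommRing K] (f : R →+* K)
    {H : Submonoid K} (hf : ∀ u : Rˣ, f u ∈ H) {x y : R} (h : Associated x y) :
    AssocIn H (f y) (f x) := by
  obtain ⟨u, rfl⟩ := h
  exact ⟨f u, hf u, ⟨f ↑u⁻¹, hf u⁻¹, by rw [← map_mul, Units.mul_inv, map_one]⟩, map_mul f x u⟩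

namespace IsTKOvermonoid

variable {R : Type*} [CommRing R] [IsDedekindDomain R] {O : Subring R}
  {H : Submonoid (FractionRing R)}

theorem algebraMap_mem_s7 (hH : IsTKOvermonoid O H) (hf : O.conductor ≠ ⊥) {x : R} (hx : x ≠ 0) :
    algebraMap R (FractionRing R) x ∈ H := by
  obtain ⟨c, hc, hc0⟩ := Submodule.exists_mem_ne_zero_of_ne_bot hf
  have hcH := hH.incl c (O.mem_of_mem_conductor hc) hc0
  refine IsKrullMonoid.mem_of_forall_mul_pow_mem hH.krull hcH (hH.nonzero _ hcH) fun j => ?_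
  rw [← map_pow, ← map_mul]
  exact hH.incl _ (hc (x ^ j)) (mul_ne_zero hc0 (pow_ne_zero j hx))

theorem isUnit_of_pow_mem (hH : IsTKOvermonoid O H) {a : R} {n : ℕ} (hn : 0 < n)
    (ha : a ^ n ∈ O) (haH : algebraMap R (FractionRing R) a ∈ H)
    (hu : IsUnit (⟨_, haH⟩ : H)) : IsUnit a := by
  have ha0 : a ≠ 0 := by
    rintro rfl
    exact hH.nonzero _ haH (map_zero _)
  obtain ⟨y, hy⟩ := (hu.pow n).exists_right_inv
  obtain ⟨b, -, hb⟩ := hH.t1' (a ^ n) ha (pow_ne_zero n ha0)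
    ⟨y, y.2, by simpa using congrArg Subtype.val hy⟩
  exact (isUnit_pow_iff hn.ne').1 (.of_mul_eq_one b hb)

end IsTKOvermonoid

theorem abs_irreducible_associated_to_order_general
    {R : Type*} [CommRing R] [IsDedekindDomain R]
    (O : Subring R) (hfg : Module.Finite ↥O R)
    (hfrac : ∀ r : R, ∃ a b : ↥O, (b : R) ≠ 0 ∧ (b : R) * r = (a : R))
    (hfin : Finite (R ⧸ O.conductor))
    (H : Submonoid (FractionRing R)) (hH : IsTKOvermonoid O H)
    (a : R) (hreg : RegF O.conductor a) (habs : AbsolutelyIrreducible a) :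
    ∃ b ∈ O, Associated a b := by
  set θ := algebraMap R (FractionRing R)
  have ha0 : a ≠ 0 := habs.1.ne_zero
  have hRH : ∀ x : R, x ≠ 0 → θ x ∈ H := fun x => hH.algebraMap_mem_s7 (O.conductor_ne_bot hfrac)
  obtain ⟨n, hn, hn1⟩ := hreg.exists_pow_sub_one_mem
  have hanO : a ^ n ∈ O :=
    sub_add_cancel (a ^ n) 1 ▸ O.add_mem (O.mem_of_mem_conductor hn1) O.one_mem
  obtain ⟨v, w, hvO, -, hvw, hva, -⟩ := hH.t2 (a ^ n) hanO (pow_ne_zero n ha0) (θ a) (hRH a ha0)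
    (θ (a ^ (n - 1))) (hRH _ (pow_ne_zero _ ha0))
    (by rw [← map_mul, ← pow_succ', Nat.sub_add_cancel hn])
  have hv0 : v ≠ 0 := left_ne_zero_of_mul (hvw ▸ pow_ne_zero n ha0)
  obtain ⟨k, hk⟩ := habs.exists_associated_pow_of_dvd_pow hn hv0 ⟨w, hvw⟩
  have hak : Associated (⟨θ a, hRH a ha0⟩ : H) (⟨θ a, hRH a ha0⟩ ^ k) := by
    have hvk := (hk.symm.assocIn_map θ fun u => hRH u u.ne_zero).associated
      (hRH _ (pow_ne_zero k ha0)) (hRH v hv0)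
    exact (hva.associated (hRH v hv0) _).trans (hvk.trans (.of_eq (Subtype.ext (map_pow θ a k))))
  obtain rfl : k = 1 := by
    by_contra hk1
    exact habs.1.not_isUnit
      (hH.isUnit_of_pow_mem hn hanO _ (hH.krull.isUnit_of_associated_pow hk1 hak))
  exact ⟨v, hvO, by simpa using hk⟩

theorem abs_irreducible_associated_to_order
    {R : Type*} [CommRing R] [IsDomain R] [IsDedekindDomain R]
    (O : Subring R) (hne : O ≠ ⊤) (hfg : Module.Finite ↥O R)
    (hfrac : ∀ r : R, ∃ a b : ↥O, (b : R) ≠ 0 ∧ (b : R) * r = (a : R))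
    (htor : ∀ c : ClassGroup R, ∃ n : ℕ, 0 < n ∧ c ^ n = 1)
    (hfin : Finite (R ⧸ O.conductor))
    (hcls : ∀ c : ClassGroup R, ∃ (P : Ideal R) (hP : P ∈ (Ideal R)⁰),
      P.IsPrime ∧ ¬ O.conductor ≤ P ∧ ClassGroup.mk0 ⟨P, hP⟩ = c)
    (H : Submonoid (FractionRing R)) (hH : IsTKOvermonoid O H)
    (a : R) (hreg : RegF O.conductor a) (habs : AbsolutelyIrreducible a) :
    ∃ b ∈ O, Associated a b :=
  abs_irreducible_associated_to_order_general O hfg hfrac hfin H hH a hreg habs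
end

section
/- Let R be a Dedekind domain whose class group Cl(R) is a torsion group, and let a ∈ R be a nonzero nonunit. Then a is absolutely irreducible in R (i.e., for every n ∈ ℕ the element a^n has a unique factorization into atoms up to associates) if and only if aR = P^{ord([P])} for some prime ideal P of R. -/
open scoped nonZeroDivisors

section Aux
variable {R : Type*} [CommRing R] [IsDomain R] [IsDedekindDomain R]

set_option linter.unusedSectionVars false

private lemma span_dvd_span_iff {a b : R} :
    Ideal.span {a} ∣ Ideal.span ({b} : Set R) ↔ a ∣ b :=
  ⟨fun h => Ideal.mem_span_singleton.mp
      (Ideal.dvd_iff_le.mp h (Ideal.mem_span_singleton.mpr dvd_rfl)),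
    fun h => Ideal.dvd_iff_le.mpr fun _d hd =>
      Ideal.mem_span_singleton.mpr (dvd_trans h (Ideal.mem_span_singleton.mp hd))⟩

private lemma prod_assoc_pow {a : R} (f : Multiset R) (h : ∀ x ∈ f, Associated x a) :
    Associated f.prod (a ^ Multiset.card f) := by
  induction f using Multiset.induction with
  | empty => simp
  | cons b s ih =>
      rw [Multiset.prod_cons, Multiset.card_cons, pow_succ, mul_comm (a ^ _) a]
      exact (h b (Multiset.mem_cons_self b s)).mul_mul
        (ih fun x hx => h x (Multiset.mem_cons_of_mem hx))

/-- Every atom dividing a power of an absolutely irreducible element is associated to it. -/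
private lemma atom_dvd_pow_assoc {a : R} (ha : a ≠ 0) (habs : AbsolutelyIrreducible a)
    {n : ℕ} (hn : 0 < n) {x : R} (hx : Irreducible x) (hdvd : x ∣ a ^ n) :
    Associated x a := by
  obtain ⟨y, hy⟩ := hdvd
  have hy0 : y ≠ 0 := by
    rintro rfl
    exact pow_ne_zero n ha (by simpa using hy)
  have hrepl : ∀ z ∈ Multiset.replicate n a, Irreducible z := fun z hz => by
    rw [Multiset.eq_of_mem_replicate hz]; exact habs.1
  have hreplp : (Multiset.replicate n a).prod = a ^ n := by
    rw [Multiset.prod_replicate]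
  by_cases hyu : IsUnit y
  · have hassoc : Associated x (x * y) :=
      (associated_mul_isUnit_right_iff hyu).mpr (Associated.refl x)
    have hxy : Irreducible (x * y) := hassoc.irreducible hx
    have := habs.2 n hn {x * y} (Multiset.replicate n a)
      (by intro z hz; rw [Multiset.mem_singleton] at hz; subst hz; exact hxy)
      hrepl (by simpa using hy.symm) hreplp
    rw [Multiset.rel_replicate_right] at this
    have hxya : Associated (x * y) a := this.2 _ (Multiset.mem_singleton_self _)
    exact hassoc.trans hxya
  · obtain ⟨f, hf, hfp, -⟩ := (WfDvdMonoid.not_unit_iff_exists_factors_eq y hy0).mp hyu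
    have := habs.2 n hn (x ::ₘ f) (Multiset.replicate n a)
      (by intro z hz; rcases Multiset.mem_cons.mp hz with rfl | hz
          exacts [hx, hf z hz])
      hrepl (by rw [Multiset.prod_cons, hfp, ← hy]) hreplp
    rw [Multiset.rel_replicate_right] at this
    exact this.2 x (Multiset.mem_cons_self _ _)

end Aux

theorem abs_irreducible_iff_prime_power
    {R : Type*} [CommRing R] [IsDomain R] [IsDedekindDomain R]
    (htor : ∀ c : ClassGroup R, ∃ n : ℕ, 0 < n ∧ c ^ n = 1)
    (a : R) (ha : a ≠ 0) (hu : ¬ IsUnit a) :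
    AbsolutelyIrreducible a ↔
      ∃ (P : Ideal R) (hP : P ∈ (Ideal R)⁰), P.IsPrime ∧
        Ideal.span {a} = P ^ orderOf (ClassGroup.mk0 ⟨P, hP⟩) := by
  have hspan0 : Ideal.span {a} ≠ ⊥ := by
    simpa [Ideal.span_singleton_eq_bot] using ha
  have hspanT : Ideal.span {a} ≠ ⊤ := by
    simpa [Ideal.span_singleton_eq_top] using hu
  have hspanNZ : Ideal.span {a} ∈ (Ideal R)⁰ :=
    mem_nonZeroDivisors_iff_ne_zero.mpr (by simpa [Ideal.zero_eq_bot] using hspan0)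
  constructor
  · -- forward direction
    intro habs
    obtain ⟨P, hPmax, hle⟩ := Ideal.exists_le_maximal _ hspanT
    have hPprime : P.IsPrime := hPmax.isPrime
    have hPbot : P ≠ ⊥ := by
      intro h
      apply ha
      have : a ∈ P := hle (Ideal.subset_span rfl)
      simpa [h] using this
    have hP : P ∈ (Ideal R)⁰ := mem_nonZeroDivisors_iff_ne_zero.mpr
      (by simpa [Ideal.zero_eq_bot] using hPbot)
    set d := orderOf (ClassGroup.mk0 ⟨P, hP⟩) with hd
    refine ⟨P, hP, hPprime, ?_⟩
    have hdpos : 0 < d := by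
      obtain ⟨n, hn, h1⟩ := htor (ClassGroup.mk0 ⟨P, hP⟩)
      exact orderOf_pos_iff.mpr (isOfFinOrder_iff_pow_eq_one.mpr ⟨n, hn, h1⟩)
    -- P ^ d is principal
    have hPdNZ : P ^ d ∈ (Ideal R)⁰ := pow_mem hP d
    have hPdprin : (P ^ d : Ideal R).IsPrincipal := by
      have : ClassGroup.mk0 ⟨P ^ d, hPdNZ⟩ = 1 := by
        have : (⟨P ^ d, hPdNZ⟩ : (Ideal R)⁰) = ⟨P, hP⟩ ^ d := by
          apply Subtype.ext; simp
        rw [this, map_pow, hd]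
        exact pow_orderOf_eq_one _
      exact (ClassGroup.mk0_eq_one_iff hPdNZ).mp this
    obtain ⟨p, hp⟩ := hPdprin
    rw [Ideal.submodule_span_eq] at hp
    have hp0 : p ≠ 0 := by
      rintro rfl
      apply pow_ne_zero d (show P ≠ (0 : Ideal R) by simpa [Ideal.zero_eq_bot] using hPbot)
      rw [Ideal.zero_eq_bot, hp]
      simp
    have hpT : ¬ IsUnit p := by
      intro h
      have : (P ^ d : Ideal R) = ⊤ := by
        rw [hp, Ideal.span_singleton_eq_top]; exact h
      exact hPmax.ne_top (top_le_iff.mp (le_trans (le_of_eq this.symm)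
        (Ideal.pow_le_self hdpos.ne')))
    -- p divides a ^ d
    have hPdvd : P ∣ Ideal.span {a} := Ideal.dvd_iff_le.mpr hle
    have hpdvd : p ∣ a ^ d := by
      rw [← span_dvd_span_iff, ← Ideal.span_singleton_pow]
      calc Ideal.span {p} = P ^ d := hp.symm
        _ ∣ Ideal.span {a} ^ d := pow_dvd_pow_of_dvd hPdvd d
    -- factor p into atoms, each associated to a
    obtain ⟨f, hf, hfp, hfne⟩ := (WfDvdMonoid.not_unit_iff_exists_factors_eq p hp0).mp hpT
    have hall : ∀ x ∈ f, Associated x a := fun x hx =>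
      atom_dvd_pow_assoc ha habs hdpos (hf x hx)
        (dvd_trans (hfp ▸ Multiset.dvd_prod hx) hpdvd)
    have hcardpos : 0 < Multiset.card f := Multiset.card_pos.mpr hfne
    have hpassoc : Associated p (a ^ Multiset.card f) := hfp ▸ prod_assoc_pow f hall
    have hPd_eq : (P ^ d : Ideal R) = Ideal.span {a} ^ Multiset.card f := by
      rw [hp, Ideal.span_singleton_pow, Ideal.span_singleton_eq_span_singleton]
      exact hpassoc
    -- span {a} divides P ^ d, hence is a power of P
    have hadvd : Ideal.span {a} ∣ P ^ d := by
      rw [hPd_eq]; exact dvd_pow_self _ hcardpos.ne'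
    obtain ⟨s, hsle, hseq⟩ := (dvd_prime_pow (Ideal.prime_of_isPrime hPbot hPprime) d).mp hadvd
    rw [associated_iff_eq] at hseq
    have hs0 : s ≠ 0 := by
      rintro rfl
      exact hspanT (by simpa using hseq)
    -- d divides s
    have hds : d ∣ s := by
      have h1 : ClassGroup.mk0 ⟨Ideal.span {a}, hspanNZ⟩ = 1 :=
        (ClassGroup.mk0_eq_one_iff hspanNZ).mpr ⟨⟨a, rfl⟩⟩
      have h2 : (⟨Ideal.span {a}, hspanNZ⟩ : (Ideal R)⁰) = ⟨P, hP⟩ ^ s := by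
        apply Subtype.ext; simpa using hseq
      rw [h2, map_pow] at h1
      exact orderOf_dvd_of_pow_eq_one h1
    have : s = d := le_antisymm hsle (Nat.le_of_dvd (Nat.pos_of_ne_zero hs0) hds)
    rw [hseq, this]
  · -- backward direction
    rintro ⟨P, hP, hPprime, hspan⟩
    have hPbot : P ≠ ⊥ := by
      simpa [Ideal.zero_eq_bot] using mem_nonZeroDivisors_iff_ne_zero.mp hP
    have hPT : P ≠ ⊤ := hPprime.ne_top
    set m := orderOf (ClassGroup.mk0 ⟨P, hP⟩) with hm
    have hinj : Function.Injective (fun k : ℕ => P ^ k) :=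
      (Ideal.pow_right_strictAnti P hPbot hPT).injective
    have hmpos : 0 < m := by
      obtain ⟨n, hn, h1⟩ := htor (ClassGroup.mk0 ⟨P, hP⟩)
      exact orderOf_pos_iff.mpr (isOfFinOrder_iff_pow_eq_one.mpr ⟨n, hn, h1⟩)
    have hPprime' : Prime P := Ideal.prime_of_isPrime hPbot hPprime
    -- key: any nonunit whose span divides a power of P spans P^j with m ∣ j, j ≠ 0
    have hkey : ∀ b : R, ¬ IsUnit b → ∀ k : ℕ, Ideal.span {b} ∣ P ^ k →
        ∃ j, j ≠ 0 ∧ m ∣ j ∧ Ideal.span {b} = P ^ j := by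
      intro b hb k hdvd
      obtain ⟨j, hjle, hjeq⟩ := (dvd_prime_pow hPprime' k).mp hdvd
      rw [associated_iff_eq] at hjeq
      have hj0 : j ≠ 0 := by
        rintro rfl
        exact hb (Ideal.span_singleton_eq_top.mp (by simpa using hjeq))
      have hbNZ : Ideal.span {b} ∈ (Ideal R)⁰ := by
        refine mem_nonZeroDivisors_iff_ne_zero.mpr ?_
        rw [hjeq]
        exact pow_ne_zero j (by simpa [Ideal.zero_eq_bot] using hPbot)
      have h1 : ClassGroup.mk0 ⟨Ideal.span {b}, hbNZ⟩ = 1 :=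
        (ClassGroup.mk0_eq_one_iff hbNZ).mpr ⟨⟨b, rfl⟩⟩
      have h2 : (⟨Ideal.span {b}, hbNZ⟩ : (Ideal R)⁰) = ⟨P, hP⟩ ^ j := by
        apply Subtype.ext; simpa using hjeq
      rw [h2, map_pow] at h1
      exact ⟨j, hj0, orderOf_dvd_of_pow_eq_one h1, hjeq⟩
    -- a is irreducible
    have hairr : Irreducible a := by
      refine ⟨hu, fun b c hbc => ?_⟩
      by_contra hcon
      push_neg at hcon
      obtain ⟨hbu, hcu⟩ := hcon
      have hsplit : Ideal.span {b} * Ideal.span {c} = P ^ m := by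
        rw [Ideal.span_singleton_mul_span_singleton, ← hbc, hspan]
      obtain ⟨jb, hjb0, hmjb, hjb⟩ := hkey b hbu m ⟨_, hsplit.symm⟩
      obtain ⟨jc, hjc0, hmjc, hjc⟩ := hkey c hcu m
        ⟨_, by rw [← hsplit, mul_comm]⟩
      have hsum : jb + jc = m := by
        apply hinj
        show P ^ (jb + jc) = P ^ m
        rw [pow_add, ← hjb, ← hjc, hsplit]
      have h1 : m ≤ jb := Nat.le_of_dvd (Nat.pos_of_ne_zero hjb0) hmjb
      have h2 : m ≤ jc := Nat.le_of_dvd (Nat.pos_of_ne_zero hjc0) hmjc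
      omega
    -- every atom dividing a power of a is associated to a
    have hatom : ∀ x : R, Irreducible x → ∀ n : ℕ, x ∣ a ^ n → Associated x a := by
      intro x hx n hdvd
      have hdvd' : Ideal.span {x} ∣ P ^ (m * n) := by
        rw [pow_mul, ← hspan, Ideal.span_singleton_pow]
        exact span_dvd_span_iff.mpr hdvd
      obtain ⟨j, hj0, hmj, hjeq⟩ := hkey x hx.not_isUnit (m * n) hdvd'
      obtain ⟨t, rfl⟩ := hmj
      have ht0 : t ≠ 0 := by rintro rfl; exact hj0 (by simp)
      have hxa : Associated x (a ^ t) := by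
        rw [← Ideal.span_singleton_eq_span_singleton, hjeq, ← Ideal.span_singleton_pow,
          hspan, ← pow_mul]
      rcases Nat.lt_or_ge t 2 with h2 | h2
      · have : t = 1 := by omega
        simpa [this] using hxa
      · exfalso
        have hirr : Irreducible (a ^ t) := hxa.irreducible hx
        obtain ⟨t', rfl⟩ : ∃ t', t = t' + 2 := ⟨t - 2, by omega⟩
        rcases hirr.isUnit_or_isUnit (pow_succ' a (t' + 1)) with h | h
        · exact hu h
        · exact hu ((isUnit_pow_iff (Nat.succ_ne_zero t')).mp h)
    refine ⟨hairr, fun n hn l mm hl hmm hlp hmp => ?_⟩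
    have hmem : ∀ L : Multiset R, (∀ x ∈ L, Irreducible x) → L.prod = a ^ n →
        (∀ x ∈ L, Associated x a) ∧ Multiset.card L = n := by
      intro L hL hLp
      have hall : ∀ x ∈ L, Associated x a := fun x hx =>
        hatom x (hL x hx) n (hLp ▸ Multiset.dvd_prod hx)
      refine ⟨hall, ?_⟩
      have h1 : Associated (a ^ n) (a ^ Multiset.card L) :=
        (hLp ▸ prod_assoc_pow L hall : Associated (a ^ n) _)
      have h2 : (P ^ (m * n) : Ideal R) = P ^ (m * Multiset.card L) := by
        rw [pow_mul, pow_mul, ← hspan, Ideal.span_singleton_pow, Ideal.span_singleton_pow,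
          Ideal.span_singleton_eq_span_singleton]
        exact h1
      exact (Nat.eq_of_mul_eq_mul_left hmpos (hinj h2)).symm
    obtain ⟨hlassoc, hlcard⟩ := hmem l hl hlp
    obtain ⟨hmassoc, hmcard⟩ := hmem mm hmm hmp
    exact Multiset.rel_of_forall
      (fun x y hx hy => (hlassoc x hx).trans (hmassoc y hy).symm)
      (hlcard.trans hmcard.symm)
end
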